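/- arXiv:2010.15783 — 6 statements merged into one kernel-verified Lean document; each statement's English description precedes it below -/
import Mathlib

section
/- Let d ≥ 1 and t ∈ ℕ, and let {(K_i, k_i)}_{i∈I} be a finite family with K_i in the unitary group U(d) of d×d complex matrices and real weights k_i, such that ∑_i k_i · K_i^{⊗t} ⊗ (K_i^*)^{⊗t} equals the Bochner integral ∫_{U(d)} U^{⊗t} ⊗ (U^*)^{⊗t} dμ with respect to the normalized (probability) Haar measure μ on U(d). For each i choose z_i ∈ ℂ with z_i^d = det K_i and set W_i = z_i⁻¹ • K_i. Then each W_i lies in the special unitary group SU(d), and ∑_i k_i · W_i^{⊗t} ⊗ (W_i^*)^{⊗t} equals ∫_{SU(d)} W^{⊗t} ⊗ (W^*)^{⊗t} dν with respect to the normalized (probability) Haar measure ν on SU(d). -/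
open Matrix MeasureTheory
open scoped Kronecker

/-- Matrices inherit the (Borel) product measurable structure of functions. -/
noncomputable instance matrixMeasurableSpace (m n : Type*) : MeasurableSpace (Matrix m n ℂ) :=
  inferInstanceAs (MeasurableSpace (m → n → ℂ))

/-- The special unitary group is a group (inverse given by the conjugate transpose). -/
noncomputable instance specialUnitaryGroup.group {n : Type*} [DecidableEq n] [Fintype n] :
    Group ↥(Matrix.specialUnitaryGroup n ℂ) :=
  { (inferInstance : Monoid ↥(Matrix.specialUnitaryGroup n ℂ)) with
    inv := fun A => ⟨star A.1, by
      obtain ⟨hu, hd⟩ := Matrix.mem_specialUnitaryGroup_iff.mp A.2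
      refine Matrix.mem_specialUnitaryGroup_iff.mpr ⟨Unitary.star_mem hu, ?_⟩
      rw [Matrix.star_eq_conjTranspose, Matrix.det_conjTranspose, hd, star_one]⟩
    inv_mul_cancel := fun A => Subtype.ext A.2.1.1 }

/-- The `t`-fold Kronecker power of a `d × d` complex matrix:
`L^{⊗t}(i,j) = ∏_{s<t} L (i s) (j s)`. -/
noncomputable def kroneckerPow {d : ℕ} (t : ℕ) (L : Matrix (Fin d) (Fin d) ℂ) :
    Matrix (Fin t → Fin d) (Fin t → Fin d) ℂ :=
  fun i j => ∏ s : Fin t, L (i s) (j s)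

/-- `L^{⊗t} ⊗ (L^*)^{⊗t}`, the matrix averaged in the definition of a `t`-design. -/
noncomputable def designMat {d : ℕ} (t : ℕ) (L : Matrix (Fin d) (Fin d) ℂ) :
    Matrix ((Fin t → Fin d) × (Fin t → Fin d)) ((Fin t → Fin d) × (Fin t → Fin d)) ℂ :=
  kroneckerPow t L ⊗ₖ kroneckerPow t (L.map (starRingEnd ℂ))

/-! Multiplying a matrix by a unit scalar `c` does not change `L^{⊗t} ⊗ (L^*)^{⊗t}`: the factors
`c ^ t` and `conj c ^ t` cancel. So the rescaling `K_i ↦ z_i⁻¹ • K_i` leaves the left-hand side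
unchanged, and it remains to compare the Haar averages over `U(d)` and `SU(d)` of a function that is
invariant under unit scalars. The map `U(1) × SU(d) → U(d)`, `(c, V) ↦ c • V`, is a continuous
surjective homomorphism (take `c` a `d`-th root of `det U`), so by uniqueness of the normalized Haar
measure it pushes the Haar probability measure of `U(1) × SU(d)` forward to that of `U(d)`, while the
second projection pushes it forward to that of `SU(d)`. -/

open Function

theorem RCLike.mem_unitary_iff_norm_eq_one {𝕜 : Type*} [RCLike 𝕜] {z : 𝕜} :
    z ∈ unitary 𝕜 ↔ ‖z‖ = 1 := by
  rw [Unitary.mem_iff_star_mul_self, RCLike.star_def, RCLike.conj_mul]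
  norm_cast
  exact pow_eq_one_iff_of_nonneg (norm_nonneg z) two_ne_zero

theorem RCLike.mem_unitary_of_pow_mem {𝕜 : Type*} [RCLike 𝕜] {z : 𝕜} {m : ℕ} (hm : m ≠ 0)
    (hz : z ^ m ∈ unitary 𝕜) : z ∈ unitary 𝕜 := by
  rw [mem_unitary_iff_norm_eq_one, norm_pow] at hz
  exact mem_unitary_iff_norm_eq_one.2 ((pow_eq_one_iff_of_nonneg (norm_nonneg z) hm).1 hz)

theorem Unitary.ne_zero_of_mem {R : Type*} [MonoidWithZero R] [StarMul R] [Nontrivial R] {U : R}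
    (hU : U ∈ unitary R) : U ≠ 0 :=
  left_ne_zero_of_mul_eq_one (Unitary.mul_star_self_of_mem hU)

theorem Unitary.inv_mem₀ {G₀ : Type*} [GroupWithZero G₀] [StarMul G₀] {U : G₀}
    (hU : U ∈ unitary G₀) : U⁻¹ ∈ unitary G₀ :=
  (inv_eq_of_mul_eq_one_right (Unitary.mul_star_self_of_mem hU)).symm ▸ Unitary.star_mem hU

theorem isCompact_unitary {E : Type*} [NormedRing E] [StarRing E] [CStarRing E] [ProperSpace E] :
    IsCompact (unitary E : Set E) := by
  refine (isCompact_closedBall (0 : E) 1).of_isClosed_subset isClosed_unitary fun U hU => ?_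
  rw [mem_closedBall_zero_iff]
  rcases subsingleton_or_nontrivial E with _ | _
  · simp [Subsingleton.elim U 0]
  · exact (CStarRing.norm_of_mem_unitary hU).le

instance : CompactSpace (unitary ℂ) := isCompact_iff_compactSpace.mp isCompact_unitary

namespace MeasureTheory.Measure

theorem exists_isHaarMeasure_isProbabilityMeasure (G : Type*) [Group G] [TopologicalSpace G]
    [IsTopologicalGroup G] [CompactSpace G] [MeasurableSpace G] [BorelSpace G] :
    ∃ μ : Measure G, μ.IsHaarMeasure ∧ IsProbabilityMeasure μ :=
  ⟨haarMeasure ⊤, inferInstance, ⟨haarMeasure_self⟩⟩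

theorem map_eq_of_isHaarMeasure_of_isProbabilityMeasure
    {G H : Type*} [Group G] [TopologicalSpace G] [MeasurableSpace G] [BorelSpace G]
    [ContinuousMul G] [Group H] [TopologicalSpace H] [IsTopologicalGroup H] [MeasurableSpace H]
    [BorelSpace H] [LocallyCompactSpace H]
    (μ : Measure G) [μ.IsHaarMeasure] [IsProbabilityMeasure μ]
    (ν : Measure H) [ν.IsHaarMeasure] [IsProbabilityMeasure ν]
    (f : G →* H) (hf : Continuous f) (hf_surj : Surjective f) :
    μ.map f = ν :=
  have := isHaarMeasure_map_of_isFiniteMeasure μ f hf hf_surj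
  have := isProbabilityMeasure_map (μ := μ) hf.aemeasurable
  isHaarMeasure_eq_of_isProbabilityMeasure _ _

end MeasureTheory.Measure

namespace Matrix

variable {n : Type*} [Fintype n] [DecidableEq n]

open scoped Matrix.Norms.L2Operator in
theorem isCompact_unitaryGroup {𝕜 : Type*} [RCLike 𝕜] :
    IsCompact (unitaryGroup n 𝕜 : Set (Matrix n n 𝕜)) :=
  have := FiniteDimensional.proper_rclike 𝕜 (Matrix n n 𝕜)
  isCompact_unitary

theorem isClosed_specialUnitaryGroup {𝕜 : Type*} [RCLike 𝕜] :
    IsClosed (specialUnitaryGroup n 𝕜 : Set (Matrix n n 𝕜)) :=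
  isClosed_unitary.inter (isClosed_singleton.preimage continuous_id.matrix_det)

instance {𝕜 : Type*} [RCLike 𝕜] : CompactSpace (unitaryGroup n 𝕜) :=
  isCompact_iff_compactSpace.mp isCompact_unitaryGroup

instance {𝕜 : Type*} [RCLike 𝕜] : CompactSpace (specialUnitaryGroup n 𝕜) :=
  isCompact_iff_compactSpace.mp <|
    isCompact_unitaryGroup.of_isClosed_subset isClosed_specialUnitaryGroup fun _ h => h.1

instance : IsTopologicalGroup (specialUnitaryGroup n ℂ) where
  continuous_mul := (continuous_subtype_val.fst'.matrix_mul continuous_subtype_val.snd').subtype_mk _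
  continuous_inv := continuous_subtype_val.matrix_conjTranspose.subtype_mk _

instance : SecondCountableTopology (Matrix n n ℂ) :=
  inferInstanceAs (SecondCountableTopology (n → n → ℂ))

instance : SecondCountableTopology (unitaryGroup n ℂ) :=
  TopologicalSpace.Subtype.secondCountableTopology _

instance : SecondCountableTopology (specialUnitaryGroup n ℂ) :=
  TopologicalSpace.Subtype.secondCountableTopology _

instance : BorelSpace (Matrix n n ℂ) := inferInstanceAs (BorelSpace (n → n → ℂ))

theorem mem_unitary_of_pow_card_eq_det [Nonempty n] {K : Matrix n n ℂ}
    (hK : K ∈ unitaryGroup n ℂ) {z : ℂ} (hz : z ^ Fintype.card n = K.det) : z ∈ unitary ℂ :=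
  RCLike.mem_unitary_of_pow_mem Fintype.card_ne_zero (hz ▸ det_of_mem_unitary hK)

theorem inv_smul_mem_specialUnitaryGroup [Nonempty n] {K : Matrix n n ℂ}
    (hK : K ∈ unitaryGroup n ℂ) {z : ℂ} (hz : z ^ Fintype.card n = K.det) :
    z⁻¹ • K ∈ specialUnitaryGroup n ℂ := by
  refine mem_specialUnitaryGroup_iff.2
    ⟨Unitary.smul_mem_of_mem (Unitary.inv_mem₀ (mem_unitary_of_pow_card_eq_det hK hz)) hK, ?_⟩
  rw [det_smul, inv_pow, hz, inv_mul_cancel₀ (Unitary.ne_zero_of_mem (det_of_mem_unitary hK))]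

noncomputable def unitarySMulSpecialUnitaryHom :
    unitary ℂ × specialUnitaryGroup n ℂ →* unitaryGroup n ℂ where
  toFun x := ⟨(x.1 : ℂ) • (x.2 : Matrix n n ℂ), Unitary.smul_mem_of_mem x.1.2 x.2.2.1⟩
  map_one' := Subtype.ext (one_smul ℂ (1 : Matrix n n ℂ))
  map_mul' _ _ := Subtype.ext (smul_mul_smul_comm _ _ _ _).symm

theorem continuous_unitarySMulSpecialUnitaryHom :
    Continuous (unitarySMulSpecialUnitaryHom (n := n)) :=
  (continuous_subtype_val.fst'.smul continuous_subtype_val.snd').subtype_mk _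

theorem unitarySMulSpecialUnitaryHom_surjective [Nonempty n] :
    Surjective (unitarySMulSpecialUnitaryHom (n := n)) := by
  intro U
  obtain ⟨z, hz⟩ := IsAlgClosed.exists_pow_nat_eq (U : Matrix n n ℂ).det (Fintype.card_pos (α := n))
  have hz_mem := mem_unitary_of_pow_card_eq_det U.2 hz
  exact ⟨(⟨z, hz_mem⟩, ⟨_, inv_smul_mem_specialUnitaryGroup U.2 hz⟩),
    Subtype.ext (smul_inv_smul₀ (Unitary.ne_zero_of_mem hz_mem) _)⟩

theorem integral_unitaryGroup_eq_integral_specialUnitaryGroup [Nonempty n]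
    {E : Type*} [NormedAddCommGroup E] [NormedSpace ℝ E]
    (μ : Measure (unitaryGroup n ℂ)) [μ.IsHaarMeasure] [IsProbabilityMeasure μ]
    (ν : Measure (specialUnitaryGroup n ℂ)) [ν.IsHaarMeasure] [IsProbabilityMeasure ν]
    {f : Matrix n n ℂ → E} (hf : Continuous f) (hf_smul : ∀ c ∈ unitary ℂ, ∀ A, f (c • A) = f A) :
    ∫ U, f U ∂μ = ∫ V, f V ∂ν := by
  obtain ⟨ρ, _, _⟩ :=
    Measure.exists_isHaarMeasure_isProbabilityMeasure (unitary ℂ × specialUnitaryGroup n ℂ)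
  have hμ : ρ.map unitarySMulSpecialUnitaryHom = μ :=
    Measure.map_eq_of_isHaarMeasure_of_isProbabilityMeasure ρ μ _
      continuous_unitarySMulSpecialUnitaryHom unitarySMulSpecialUnitaryHom_surjective
  have hν : ρ.map Prod.snd = ν :=
    Measure.map_eq_of_isHaarMeasure_of_isProbabilityMeasure ρ ν (MonoidHom.snd _ _) continuous_snd
      Prod.snd_surjective
  have hf_U : Continuous fun U : unitaryGroup n ℂ => f U := hf.comp continuous_subtype_val
  have hf_V : Continuous fun V : specialUnitaryGroup n ℂ => f V := hf.comp continuous_subtype_val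
  rw [← hμ, ← hν, integral_map continuous_unitarySMulSpecialUnitaryHom.aemeasurable
    hf_U.aestronglyMeasurable, integral_map continuous_snd.aemeasurable hf_V.aestronglyMeasurable]
  exact integral_congr_ae (Filter.Eventually.of_forall fun x => hf_smul _ x.1.2 _)

end Matrix

section designMat

variable {d : ℕ} (t : ℕ)

theorem kroneckerPow_smul (c : ℂ) (L : Matrix (Fin d) (Fin d) ℂ) :
    kroneckerPow t (c • L) = c ^ t • kroneckerPow t L := by
  ext i j
  simp [kroneckerPow, Finset.prod_mul_distrib]

theorem designMat_smul (c : ℂ) (L : Matrix (Fin d) (Fin d) ℂ) :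
    designMat t (c • L) = (c ^ t * starRingEnd ℂ c ^ t) • designMat t L := by
  rw [designMat, designMat, Matrix.map_smul' _ _ _ (map_mul _), kroneckerPow_smul,
    kroneckerPow_smul, smul_kronecker, kronecker_smul, smul_smul]

theorem designMat_smul_of_mem_unitary {c : ℂ} (hc : c ∈ unitary ℂ)
    (L : Matrix (Fin d) (Fin d) ℂ) : designMat t (c • L) = designMat t L := by
  rw [designMat_smul, ← mul_pow, ← RCLike.star_def, Unitary.mul_star_self_of_mem hc, one_pow,
    one_smul]

theorem continuous_designMat_apply (p q : (Fin t → Fin d) × (Fin t → Fin d)) :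
    Continuous fun L : Matrix (Fin d) (Fin d) ℂ => designMat t L p q := by
  simp only [designMat, kroneckerPow, kroneckerMap_apply, map_apply]
  fun_prop

end designMat

/-- A unitary `t`-design `{(K_i, k_i)}` on `U(d)`, rescaled by `d`-th roots
`z_i` of the determinants (`W_i = z_i⁻¹ • K_i`), yields matrices in `SU(d)` forming a
`t`-design on `SU(d)` (all integrals taken entrywise, w.r.t. normalized Haar measures). -/
theorem unitary_design_to_specialUnitary_design (d : ℕ) (hd : 1 ≤ d) (t : ℕ)
    {I : Type*} [Fintype I]
    (K : I → ↥(Matrix.unitaryGroup (Fin d) ℂ)) (k : I → ℝ)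
    (μ : Measure ↥(Matrix.unitaryGroup (Fin d) ℂ))
    [μ.IsHaarMeasure] [IsProbabilityMeasure μ]
    (ν : Measure ↥(Matrix.specialUnitaryGroup (Fin d) ℂ))
    [ν.IsHaarMeasure] [IsProbabilityMeasure ν]
    (hdesign : ∀ p q : (Fin t → Fin d) × (Fin t → Fin d),
      (∑ i : I, (k i : ℂ) • designMat t (K i : Matrix (Fin d) (Fin d) ℂ)) p q =
        ∫ U : ↥(Matrix.unitaryGroup (Fin d) ℂ),
          designMat t (U : Matrix (Fin d) (Fin d) ℂ) p q ∂μ)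
    (z : I → ℂ) (hz : ∀ i, z i ^ d = (K i : Matrix (Fin d) (Fin d) ℂ).det)
    (W : I → Matrix (Fin d) (Fin d) ℂ)
    (hW : ∀ i, W i = (z i)⁻¹ • (K i : Matrix (Fin d) (Fin d) ℂ)) :
    (∀ i, W i ∈ Matrix.specialUnitaryGroup (Fin d) ℂ) ∧
      ∀ p q : (Fin t → Fin d) × (Fin t → Fin d),
        (∑ i : I, (k i : ℂ) • designMat t (W i)) p q =
          ∫ V : ↥(Matrix.specialUnitaryGroup (Fin d) ℂ),
            designMat t (V : Matrix (Fin d) (Fin d) ℂ) p q ∂ν := by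
  have : Nonempty (Fin d) := ⟨⟨0, hd⟩⟩
  have hz_card : ∀ i, z i ^ Fintype.card (Fin d) = (K i : Matrix (Fin d) (Fin d) ℂ).det := by
    simpa only [Fintype.card_fin] using hz
  refine ⟨fun i => hW i ▸ inv_smul_mem_specialUnitaryGroup (K i).2 (hz_card i), fun p q => ?_⟩
  have hW_K : ∀ i, designMat t (W i) = designMat t (K i : Matrix (Fin d) (Fin d) ℂ) := fun i => by
    rw [hW i, designMat_smul_of_mem_unitary t
      (Unitary.inv_mem₀ (mem_unitary_of_pow_card_eq_det (K i).2 (hz_card i)))]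
  simp only [hW_K]
  rw [hdesign p q]
  exact integral_unitaryGroup_eq_integral_specialUnitaryGroup μ ν
    (continuous_designMat_apply t p q) fun c hc A => by rw [designMat_smul_of_mem_unitary t hc]
end

section
/- Every 2×2 complex matrix M with det M = 1 admits a Cartan (KAK / singular value) decomposition: there exist matrices U and V in the special unitary group SU(2) and a real number x ≥ 1 such that M = U · A_x · V, where A_x = diag(x, x⁻¹). -/
open Matrix

/-- `A_x = diag(x, x⁻¹)` as a `2 × 2` complex matrix, for a real parameter `x`. -/
noncomputable def Ax (x : ℝ) : Matrix (Fin 2) (Fin 2) ℂ :=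
  Matrix.diagonal ![(x : ℂ), (x : ℂ)⁻¹]

lemma Ax_mul_Ax_inv {x : ℝ} (hx : x ≠ 0) : Ax x * Ax x⁻¹ = 1 := by
  have hx' : (x : ℂ) ≠ 0 := by exact_mod_cast hx
  ext i j
  fin_cases i <;> fin_cases j <;>
    simp [Ax, Matrix.mul_apply, Fin.sum_univ_two, Matrix.diagonal_apply, Matrix.one_apply, hx']

lemma Ax_inv_mul_Ax {x : ℝ} (hx : x ≠ 0) : Ax x⁻¹ * Ax x = 1 := by
  have hx' : (x : ℂ) ≠ 0 := by exact_mod_cast hx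
  ext i j
  fin_cases i <;> fin_cases j <;>
    simp [Ax, Matrix.mul_apply, Fin.sum_univ_two, Matrix.diagonal_apply, Matrix.one_apply, hx']

lemma Ax_conjTranspose (x : ℝ) : (Ax x)ᴴ = Ax x := by
  ext i j
  fin_cases i <;> fin_cases j <;>
    simp [Ax, Matrix.conjTranspose_apply, Matrix.diagonal_apply, Complex.conj_ofReal,
      ← Complex.ofReal_inv]

lemma aux_cartan (M : Matrix (Fin 2) (Fin 2) ℂ) (hM : M.det = 1)
    (U₀ : Matrix (Fin 2) (Fin 2) ℂ) (hU₀ : U₀ ∈ Matrix.unitaryGroup (Fin 2) ℂ)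
    (a b : ℝ) (hb : 0 < b) (hba : b ≤ a) (hab1 : a * b = 1)
    (hP : Mᴴ * M = U₀ * Matrix.diagonal ![(a : ℂ), (b : ℂ)] * U₀ᴴ) :
    ∃ U ∈ Matrix.specialUnitaryGroup (Fin 2) ℂ,
      ∃ V ∈ Matrix.specialUnitaryGroup (Fin 2) ℂ,
        ∃ x : ℝ, 1 ≤ x ∧ M = U * Ax x * V := by
  have ha : 0 < a := lt_of_lt_of_le hb hba
  have ha1 : 1 ≤ a := by nlinarith
  have hbinv : b = a⁻¹ := by field_simp; linarith [hab1]
  set x : ℝ := Real.sqrt a with hxdef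
  have hx1 : 1 ≤ x := by
    rw [hxdef]; rw [show (1:ℝ) = Real.sqrt 1 by simp]; exact Real.sqrt_le_sqrt ha1
  have hx0 : 0 < x := lt_of_lt_of_le one_pos hx1
  have hxsq : x * x = a := Real.mul_self_sqrt ha.le
  -- unitarity of U₀
  have hU₀' : U₀ * U₀ᴴ = 1 := by
    have := (Matrix.mem_unitaryGroup_iff).mp hU₀
    simpa [Matrix.star_eq_conjTranspose] using this
  have hU₀'' : U₀ᴴ * U₀ = 1 := by
    have := (Matrix.mem_unitaryGroup_iff').mp hU₀
    simpa [Matrix.star_eq_conjTranspose] using this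
  set u : ℂ := U₀.det with hudef
  have hu : u * (starRingEnd ℂ) u = 1 := by
    have := congrArg Matrix.det hU₀'
    simpa [Matrix.det_mul, Matrix.det_conjTranspose, hudef] using this
  have hu0 : u ≠ 0 := by
    intro h; rw [h] at hu; simp at hu
  have huinv : u⁻¹ * ((starRingEnd ℂ) u)⁻¹ = 1 := by
    rw [← mul_inv, hu, inv_one]
  -- phase correction
  set dg : Matrix (Fin 2) (Fin 2) ℂ := Matrix.diagonal ![u⁻¹, 1] with hdgdef
  have hdg_star : dg * dgᴴ = 1 := by
    ext i j
    fin_cases i <;> fin_cases j <;>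
      simp [hdgdef, Matrix.mul_apply, Fin.sum_univ_two, Matrix.conjTranspose_apply,
        Matrix.diagonal_apply, Matrix.one_apply, map_inv₀, huinv]
  have hdg_star' : dgᴴ * dg = 1 := by
    ext i j
    fin_cases i <;> fin_cases j <;>
      simp [hdgdef, Matrix.mul_apply, Fin.sum_univ_two, Matrix.conjTranspose_apply,
        Matrix.diagonal_apply, Matrix.one_apply, map_inv₀, mul_comm, huinv]
  set U₂ : Matrix (Fin 2) (Fin 2) ℂ := U₀ * dg with hU₂def
  have hU₂star : U₂ * U₂ᴴ = 1 := by
    rw [hU₂def, Matrix.conjTranspose_mul, mul_assoc, ← mul_assoc dg, hdg_star, one_mul, hU₀']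
  have hU₂star' : U₂ᴴ * U₂ = 1 := by
    rw [hU₂def, Matrix.conjTranspose_mul, mul_assoc, ← mul_assoc U₀ᴴ, hU₀'', one_mul, hdg_star']
  have hdetU₂ : U₂.det = 1 := by
    rw [hU₂def, Matrix.det_mul, hdgdef, Matrix.det_diagonal, Fin.prod_univ_two]
    simp [← hudef, hu0]
  set D : Matrix (Fin 2) (Fin 2) ℂ := Matrix.diagonal ![(a : ℂ), (b : ℂ)] with hDdef
  -- dg commutes through D
  have hdgD : dg * D * dgᴴ = D := by
    ext i j
    fin_cases i <;> fin_cases j <;>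
      simp [hdgdef, hDdef, Matrix.mul_apply, Fin.sum_univ_two, Matrix.conjTranspose_apply,
        Matrix.diagonal_apply, map_inv₀]
    rw [show u⁻¹ * (a : ℂ) * ((starRingEnd ℂ) u)⁻¹ = (a:ℂ) * (u⁻¹ * ((starRingEnd ℂ) u)⁻¹) by
      ring, huinv, mul_one]
  have hP₂ : Mᴴ * M = U₂ * D * U₂ᴴ := by
    rw [hU₂def, Matrix.conjTranspose_mul]
    rw [show U₀ * dg * D * (dgᴴ * U₀ᴴ) = U₀ * (dg * D * dgᴴ) * U₀ᴴ by
      simp only [mul_assoc]]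
    rw [hdgD]; exact hP
  -- the B matrix
  set B : Matrix (Fin 2) (Fin 2) ℂ := Ax x⁻¹ with hBdef
  have hAB : Ax x * B = 1 := Ax_mul_Ax_inv (ne_of_gt hx0)
  have hBA : B * Ax x = 1 := Ax_inv_mul_Ax (ne_of_gt hx0)
  have hBH : Bᴴ = B := Ax_conjTranspose x⁻¹
  have hx0' : (x : ℂ) ≠ 0 := by exact_mod_cast ne_of_gt hx0
  have hxa : (x : ℂ) * (x : ℂ) = (a : ℂ) := by exact_mod_cast hxsq
  have ha0' : (a : ℂ) ≠ 0 := by exact_mod_cast ne_of_gt ha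
  have hBDB : B * D * B = 1 := by
    have hbval : (b : ℂ) = ((a : ℝ) : ℂ)⁻¹ := by rw [hbinv]; push_cast; ring
    ext i j
    fin_cases i <;> fin_cases j <;>
      simp [hBdef, hDdef, Ax, Matrix.mul_apply, Fin.sum_univ_two,
        Matrix.diagonal_apply, Matrix.one_apply, Complex.ofReal_inv, hx0']
    · rw [← hxa]; field_simp
    · rw [hbval, ← hxa]; field_simp
  have hdetB : B.det = 1 := by
    have hx0'' : ((x⁻¹ : ℝ) : ℂ) ≠ 0 := by
      exact_mod_cast inv_ne_zero (ne_of_gt hx0)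
    simp [hBdef, Ax, Matrix.det_diagonal, Fin.prod_univ_two, hx0'']
    exact inv_mul_cancel₀ hx0'
  -- the left factor
  set W : Matrix (Fin 2) (Fin 2) ℂ := M * U₂ * B with hWdef
  have hWunit : Wᴴ * W = 1 := by
    rw [hWdef]
    simp only [Matrix.conjTranspose_mul, hBH]
    calc B * (U₂ᴴ * Mᴴ) * (M * U₂ * B) = B * (U₂ᴴ * (Mᴴ * M) * U₂) * B := by
          simp only [mul_assoc]
      _ = B * D * B := by
          rw [hP₂]
          rw [show U₂ᴴ * (U₂ * D * U₂ᴴ) * U₂ = (U₂ᴴ * U₂) * D * (U₂ᴴ * U₂) by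
            simp only [mul_assoc]]
          rw [hU₂star', one_mul, mul_one]
      _ = 1 := hBDB
  have hdetW : W.det = 1 := by
    rw [hWdef, Matrix.det_mul, Matrix.det_mul, hM, hdetU₂, hdetB]; ring
  refine ⟨W, ?_, U₂ᴴ, ?_, x, hx1, ?_⟩
  · rw [Matrix.mem_specialUnitaryGroup_iff]
    refine ⟨(Matrix.mem_unitaryGroup_iff').mpr ?_, hdetW⟩
    simpa [Matrix.star_eq_conjTranspose] using hWunit
  · rw [Matrix.mem_specialUnitaryGroup_iff]
    constructor
    · refine (Matrix.mem_unitaryGroup_iff).mpr ?_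
      simpa [Matrix.star_eq_conjTranspose] using hU₂star'
    · rw [Matrix.det_conjTranspose, hdetU₂]; simp
  · rw [hWdef]
    rw [show M * U₂ * B * Ax x * U₂ᴴ = M * U₂ * (B * Ax x) * U₂ᴴ by simp only [mul_assoc]]
    rw [hBA, mul_one, mul_assoc, hU₂star, mul_one]

/-- Cartan (KAK / singular value) decomposition of `SL(2,ℂ)`:
every `2 × 2` complex matrix of determinant `1` is `U · A_x · V` with
`U, V ∈ SU(2)` and `x ≥ 1`. -/
theorem sl2_cartan_decomposition (M : Matrix (Fin 2) (Fin 2) ℂ) (hM : M.det = 1) :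
    ∃ U ∈ Matrix.specialUnitaryGroup (Fin 2) ℂ,
      ∃ V ∈ Matrix.specialUnitaryGroup (Fin 2) ℂ,
        ∃ x : ℝ, 1 ≤ x ∧ M = U * Ax x * V := by
  classical
  have hP : (Mᴴ * M).IsHermitian := Matrix.isHermitian_conjTranspose_mul_self M
  have hspec := hP.spectral_theorem
  set μ : Fin 2 → ℝ := hP.eigenvalues with hμdef
  have hnn : ∀ i, 0 ≤ μ i := fun i =>
    Matrix.eigenvalues_conjTranspose_mul_self_nonneg M i
  have hdetP : (Mᴴ * M).det = 1 := by
    rw [Matrix.det_mul, Matrix.det_conjTranspose, hM]; simp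
  have hprod : μ 0 * μ 1 = 1 := by
    have h := hP.det_eq_prod_eigenvalues
    rw [Fin.prod_univ_two, hdetP] at h
    have h' : ((μ 0 * μ 1 : ℝ) : ℂ) = 1 := by rw [Complex.ofReal_mul]; exact h.symm
    exact_mod_cast h'
  have h0pos : 0 < μ 0 := by
    rcases lt_or_eq_of_le (hnn 0) with h | h
    · exact h
    · exfalso; rw [← h] at hprod; simp at hprod
  have h1pos : 0 < μ 1 := by
    rcases lt_or_eq_of_le (hnn 1) with h | h
    · exact h
    · exfalso; rw [← h] at hprod; simp at hprod
  set U₀ : Matrix (Fin 2) (Fin 2) ℂ := (hP.eigenvectorUnitary : Matrix (Fin 2) (Fin 2) ℂ) with hU₀def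
  have hU₀mem : U₀ ∈ Matrix.unitaryGroup (Fin 2) ℂ := hP.eigenvectorUnitary.2
  have hdiagfun : (RCLike.ofReal ∘ μ : Fin 2 → ℂ) = ![(μ 0 : ℂ), (μ 1 : ℂ)] := by
    funext i; fin_cases i <;> rfl
  have hspec' : Mᴴ * M = U₀ * Matrix.diagonal ![(μ 0 : ℂ), (μ 1 : ℂ)] * U₀ᴴ := by
    conv_lhs => rw [hspec]
    rw [hdiagfun]
    rfl
  rcases le_or_gt (μ 1) (μ 0) with hle | hlt
  · exact aux_cartan M hM U₀ hU₀mem (μ 0) (μ 1) h1pos hle hprod hspec'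
  · -- swap using S ∈ SU(2)
    set S : Matrix (Fin 2) (Fin 2) ℂ := !![0, 1; -1, 0] with hSdef
    have hSunit : S * Sᴴ = 1 := by
      rw [hSdef]
      ext i j
      fin_cases i <;> fin_cases j <;>
        simp [Matrix.mul_apply, Matrix.vecMul, dotProduct, Fin.sum_univ_two,
          Matrix.conjTranspose_apply, Matrix.diagonal_apply, Matrix.one_apply]
    have hSmem : U₀ * S ∈ Matrix.unitaryGroup (Fin 2) ℂ := by
      rw [Matrix.mem_unitaryGroup_iff]
      rw [Matrix.star_eq_conjTranspose, Matrix.conjTranspose_mul]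
      rw [show U₀ * S * (Sᴴ * U₀ᴴ) = U₀ * (S * Sᴴ) * U₀ᴴ by simp only [mul_assoc]]
      rw [hSunit, mul_one]
      have := (Matrix.mem_unitaryGroup_iff).mp hU₀mem
      simpa [Matrix.star_eq_conjTranspose] using this
    have hswap : S * Matrix.diagonal ![(μ 1 : ℂ), (μ 0 : ℂ)] * Sᴴ
        = Matrix.diagonal ![(μ 0 : ℂ), (μ 1 : ℂ)] := by
      rw [hSdef]
      ext i j
      fin_cases i <;> fin_cases j <;>
        simp [Matrix.mul_apply, Matrix.vecMul, dotProduct, Fin.sum_univ_two,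
          Matrix.conjTranspose_apply, Matrix.diagonal_apply, Matrix.one_apply]
    have hspec'' : Mᴴ * M = (U₀ * S) * Matrix.diagonal ![(μ 1 : ℂ), (μ 0 : ℂ)] * (U₀ * S)ᴴ := by
      rw [Matrix.conjTranspose_mul]
      rw [show U₀ * S * Matrix.diagonal ![(μ 1 : ℂ), (μ 0 : ℂ)] * (Sᴴ * U₀ᴴ)
          = U₀ * (S * Matrix.diagonal ![(μ 1 : ℂ), (μ 0 : ℂ)] * Sᴴ) * U₀ᴴ by
        simp only [mul_assoc]]
      rw [hswap, hspec']
    exact aux_cartan M hM (U₀ * S) hSmem (μ 1) (μ 0) h0pos (le_of_lt hlt)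
      (by rw [mul_comm]; exact hprod) hspec''
end

section
/- The middle factor in the Cartan decomposition of an SL(2,ℂ) matrix is unique: if U, U', V, V' are matrices in the special unitary group SU(2) and x, x' are real numbers with x ≥ 1 and x' ≥ 1 such that U · A_x · V = U' · A_{x'} · V', then x = x'. -/
open Matrix

lemma trace_aux (U V : Matrix (Fin 2) (Fin 2) ℂ)
    (hU : U ∈ Matrix.unitaryGroup (Fin 2) ℂ)
    (hV : V ∈ Matrix.unitaryGroup (Fin 2) ℂ) (x : ℝ) :
    Matrix.trace (star (U * Ax x * V) * (U * Ax x * V)) = (x : ℂ)^2 + ((x : ℂ)⁻¹)^2 := by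
  have hUs : star U * U = 1 := (Matrix.mem_unitaryGroup_iff').mp hU
  have hVs : V * star V = 1 := (Matrix.mem_unitaryGroup_iff).mp hV
  have hAx : star (Ax x) = Ax x := by
    ext i j
    fin_cases i <;> fin_cases j <;>
      simp [Ax, Matrix.conjTranspose_apply, Matrix.diagonal, ← Complex.ofReal_inv]
  have this1 : star (U * Ax x * V) * (U * Ax x * V)
      = star V * (Ax x * Ax x) * V := by
    simp only [StarMul.star_mul, hAx, mul_assoc]
    rw [← mul_assoc (star U) U, hUs, one_mul]
  rw [this1, Matrix.trace_mul_cycle, ← mul_assoc, hVs, one_mul]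
  simp [Ax, Matrix.diagonal_mul_diagonal, Matrix.trace_diagonal, Fin.sum_univ_two, sq]

/-- Uniqueness of the middle factor in the Cartan decomposition on
`SL(2,ℂ)`: if `U·A_x·V = U'·A_{x'}·V'` with `U, U', V, V' ∈ SU(2)` and `x, x' ≥ 1`,
then `x = x'`. -/
theorem sl2_cartan_middle_factor_unique
    (U U' V V' : Matrix (Fin 2) (Fin 2) ℂ)
    (hU : U ∈ Matrix.specialUnitaryGroup (Fin 2) ℂ)
    (hU' : U' ∈ Matrix.specialUnitaryGroup (Fin 2) ℂ)
    (hV : V ∈ Matrix.specialUnitaryGroup (Fin 2) ℂ)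
    (hV' : V' ∈ Matrix.specialUnitaryGroup (Fin 2) ℂ)
    (x x' : ℝ) (hx : 1 ≤ x) (hx' : 1 ≤ x')
    (h : U * Ax x * V = U' * Ax x' * V') : x = x' := by
  have h1 := trace_aux U V (Matrix.mem_specialUnitaryGroup_iff.mp hU).1
    (Matrix.mem_specialUnitaryGroup_iff.mp hV).1 x
  have h2 := trace_aux U' V' (Matrix.mem_specialUnitaryGroup_iff.mp hU').1
    (Matrix.mem_specialUnitaryGroup_iff.mp hV').1 x'
  rw [h] at h1
  have hC : (x : ℂ)^2 + ((x : ℂ)⁻¹)^2 = (x' : ℂ)^2 + ((x' : ℂ)⁻¹)^2 := h1.symm.trans h2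
  have hR : x^2 + (x⁻¹)^2 = x'^2 + (x'⁻¹)^2 := by
    exact_mod_cast hC
  have hx0 : (0:ℝ) < x := lt_of_lt_of_le one_pos hx
  have hx'0 : (0:ℝ) < x' := lt_of_lt_of_le one_pos hx'
  have hpoly : (x^2 - x'^2) * (x^2 * x'^2 - 1) = 0 := by
    field_simp at hR
    nlinarith [hR]
  rcases mul_eq_zero.mp hpoly with h3 | h3
  · have : x^2 = x'^2 := by linarith
    nlinarith
  · have hxx' : x * x' = 1 := by
      nlinarith [sq_nonneg (x*x'-1), mul_pos hx0 hx'0, mul_le_mul hx hx' zero_le_one (le_of_lt hx0)]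
    have hx1 : x = 1 := by nlinarith [mul_nonneg (le_of_lt hx0) (sub_nonneg.mpr hx')]
    have hx'1 : x' = 1 := by nlinarith [mul_nonneg (le_of_lt hx'0) (sub_nonneg.mpr hx)]
    rw [hx1, hx'1]
end

section
/- Global Cartan (polar) decomposition of SL(2,ℂ): for every 2×2 complex matrix M with det M = 1, there exists a unique pair (K, p) where K is in the special unitary group SU(2) and p is a 2×2 Hermitian complex matrix with trace p = 0, such that M = K · exp(p), where exp is the matrix exponential. -/
/-!
`Mᴴ M` is positive definite, hence equal to `exp p * exp p` for the Hermitian `p = ½ log (Mᴴ M)`,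
and `K = M exp (-p)` is then unitary. Conversely `M = K exp p` forces `Mᴴ M = exp (2 p)`, which
determines `p` since the functional-calculus logarithm inverts `exp` on Hermitian matrices.
Finally `det M = det K · e^{tr p}` with `|det K| = 1` and `tr p` real, so `det M = 1` forces
`tr p = 0` and `det K = 1`.
-/

open Matrix NormedSpace
-- The operator norm is only needed by the functional calculus; `exp` does not depend on it.
open scoped Matrix.Norms.L2Operator MatrixOrder ComplexOrder

namespace Matrix

section NormedRing

variable {n 𝔸 : Type*} [Fintype n] [DecidableEq n] [NormedRing 𝔸] [NormedAlgebra ℚ 𝔸]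
  [CompleteSpace 𝔸]

theorem exp_neg_mul_exp (p : Matrix n n 𝔸) : exp (-p) * exp p = 1 := by
  rw [← exp_add_of_commute _ _ (Commute.refl p).neg_left, neg_add_cancel, exp_zero]

theorem exp_mul_exp_neg (p : Matrix n n 𝔸) : exp p * exp (-p) = 1 := by
  simpa using exp_neg_mul_exp (-p)

end NormedRing

variable {n : Type*} [Fintype n] [DecidableEq n]

theorem exp_injOn_isHermitian : Set.InjOn exp {p : Matrix n n ℂ | p.IsHermitian} :=
  fun p hp q hq h => by
    rw [← CFC.log_exp p hp.isSelfAdjoint, h, CFC.log_exp q hq.isSelfAdjoint]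

theorem IsHermitian.eq_of_exp_mul_self_eq {p q : Matrix n n ℂ} (hp : p.IsHermitian)
    (hq : q.IsHermitian)
    (h : NormedSpace.exp p * NormedSpace.exp p = NormedSpace.exp q * NormedSpace.exp q) :
    p = q := by
  simp only [← exp_add_of_commute _ _ (Commute.refl _)] at h
  simpa [← two_smul ℂ] using exp_injOn_isHermitian (hp.add hp) (hq.add hq) h

theorem IsHermitian.det_cfc {A : Matrix n n ℂ} (hA : A.IsHermitian) (f : ℝ → ℝ) :
    (cfc f A).det = ∏ i, (f (hA.eigenvalues i) : ℂ) := by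
  rw [hA.cfc_eq, IsHermitian.cfc, Unitary.conjStarAlgAut_apply, det_mul, det_mul, det_diagonal,
    mul_right_comm, ← det_mul, Unitary.mul_star_self_of_mem (SetLike.coe_mem _), det_one, one_mul]
  rfl

theorem IsHermitian.det_exp_eq {p : Matrix n n ℂ} (hp : p.IsHermitian) :
    (NormedSpace.exp p).det = Real.exp p.trace.re := by
  rw [← CFC.real_exp_eq_normedSpace_exp hp.isSelfAdjoint, hp.det_cfc, hp.trace_eq_sum_eigenvalues]
  simp [Real.exp_sum]

theorem exists_isHermitian_exp_mul_self_eq {A : Matrix n n ℂ} (hA : A.PosDef) :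
    ∃ p : Matrix n n ℂ, p.IsHermitian ∧ exp p * exp p = A := by
  refine ⟨(2⁻¹ : ℝ) • CFC.log A, (IsSelfAdjoint.all _).smul IsSelfAdjoint.log, ?_⟩
  rw [← exp_add_of_commute _ _ (Commute.refl _), ← two_smul ℝ, smul_smul]
  norm_num
  exact CFC.exp_log A hA.isStrictlyPositive

theorem conjTranspose_mul_self_of_eq_mul_exp {M K p : Matrix n n ℂ} (hK : K ∈ unitaryGroup n ℂ)
    (hp : p.IsHermitian) (hM : M = K * exp p) : Mᴴ * M = exp p * exp p := by
  rw [hM, conjTranspose_mul, hp.exp, mul_assoc, ← mul_assoc Kᴴ, ← star_eq_conjTranspose,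
    mem_unitaryGroup_iff'.mp hK, one_mul]

theorem mul_exp_neg_mem_unitaryGroup {M p : Matrix n n ℂ} (hp : p.IsHermitian)
    (hMp : Mᴴ * M = exp p * exp p) : M * exp (-p) ∈ unitaryGroup n ℂ := by
  rw [mem_unitaryGroup_iff', star_eq_conjTranspose, conjTranspose_mul, hp.neg.exp]
  calc exp (-p) * Mᴴ * (M * exp (-p)) = exp (-p) * (Mᴴ * M) * exp (-p) := by noncomm_ring
    _ = (exp (-p) * exp p) * (exp p * exp (-p)) := by rw [hMp]; noncomm_ring
    _ = 1 := by rw [exp_neg_mul_exp, exp_mul_exp_neg, one_mul]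

theorem existsUnique_unitary_mul_exp {M : Matrix n n ℂ} (hM : IsUnit M) :
    ∃! Kp : unitaryGroup n ℂ × Matrix n n ℂ, Kp.2.IsHermitian ∧ M = Kp.1 * exp Kp.2 := by
  have hMM : (Mᴴ * M).PosDef :=
    (posSemidef_conjTranspose_mul_self M).posDef_iff_isUnit.mpr (hM.star.mul hM)
  obtain ⟨p, hp, hMp⟩ := exists_isHermitian_exp_mul_self_eq hMM
  refine ⟨(⟨M * exp (-p), mul_exp_neg_mem_unitaryGroup hp hMp.symm⟩, p), ⟨hp, ?_⟩, ?_⟩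
  · rw [mul_assoc, exp_neg_mul_exp, mul_one]
  rintro ⟨K', p'⟩ ⟨hp' : p'.IsHermitian, hM' : M = K' * exp p'⟩
  obtain rfl : p' = p :=
    hp'.eq_of_exp_mul_self_eq hp (by rw [← conjTranspose_mul_self_of_eq_mul_exp K'.2 hp' hM', hMp])
  refine Prod.ext (Subtype.ext ?_) rfl
  change K'.1 = M * exp (-p')
  rw [hM', mul_assoc, exp_mul_exp_neg, mul_one]

theorem trace_eq_zero_and_det_eq_one_of_det_mul_exp {K p : Matrix n n ℂ}
    (hK : K ∈ unitaryGroup n ℂ) (hp : p.IsHermitian) (h : (K * exp p).det = 1) :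
    p.trace = 0 ∧ K.det = 1 := by
  have hK_norm : ‖K.det‖ = 1 := CStarRing.norm_of_mem_unitary (det_of_mem_unitary hK)
  rw [det_mul, hp.det_exp_eq] at h
  have hre : p.trace.re = 0 := by simpa [hK_norm] using congrArg norm h
  have htr : p.trace = 0 := by
    have hreal : star p.trace = p.trace := by rw [← trace_conjTranspose, hp.eq]
    rw [← Complex.conj_eq_iff_re.mp hreal, hre, Complex.ofReal_zero]
  simpa [htr] using h

end Matrix

/-- Global Cartan (polar) decomposition of `SL(2,ℂ)`: every `2 × 2`
complex matrix of determinant `1` is uniquely `K · exp(p)` with `K ∈ SU(2)` and `p`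
Hermitian traceless. -/
theorem sl2_polar_decomposition (M : Matrix (Fin 2) (Fin 2) ℂ) (hM : M.det = 1) :
    ∃! Kp : Matrix.specialUnitaryGroup (Fin 2) ℂ × Matrix (Fin 2) (Fin 2) ℂ,
      Kp.2.IsHermitian ∧ Kp.2.trace = 0 ∧
        M = (Kp.1 : Matrix (Fin 2) (Fin 2) ℂ) * NormedSpace.exp Kp.2 := by
  obtain ⟨⟨K, p⟩, ⟨hp, hMKp⟩, huniq⟩ :=
    existsUnique_unitary_mul_exp ((isUnit_iff_isUnit_det M).mpr (hM ▸ isUnit_one))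
  obtain ⟨htr, hK⟩ := trace_eq_zero_and_det_eq_one_of_det_mul_exp K.2 hp (hMKp ▸ hM)
  refine ⟨(⟨K, K.2, hK⟩, p), ⟨hp, htr, hMKp⟩, ?_⟩
  rintro ⟨K', p'⟩ ⟨hp', -, hM'⟩
  have := huniq (⟨K', (mem_specialUnitaryGroup_iff.mp K'.2).1⟩, p') ⟨hp', hM'⟩
  simpa only [Prod.mk.injEq, Subtype.ext_iff] using this
end

section
/- Product t-design theorem for SL(2,ℂ): let t ∈ ℕ and let v : ℝ → ℝ be a nonnegative measurable function supported on [1,∞) such that the measure μ_A on [1,∞) with density v with respect to Lebesgue measure is finite with total mass Z > 0 and all entries of x ↦ A_x^{⊗t} ⊗ (A_x^*)^{⊗t} are μ_A-integrable. Suppose {(K_α, k_α)}_{α∈I} is a finite family in the special unitary group SU(2) with real weights such that ∑_α k_α · K_α^{⊗t} ⊗ (K_α^*)^{⊗t} = ∫_{SU(2)} U^{⊗t} ⊗ (U^*)^{⊗t} dμ_K, where μ_K is the normalized (probability) Haar measure on SU(2); and suppose {(x_β, a_β)}_{β∈J} is a finite family with x_β ≥ 1 and real weights such that ∑_β a_β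 · A_{x_β}^{⊗t} ⊗ (A_{x_β}^*)^{⊗t} = (1/Z) ∫_1^∞ A_x^{⊗t} ⊗ (A_x^*)^{⊗t} v(x) dx. Then ∑_{α,β,γ∈I×J×I} k_α · a_β · k_γ · (K_α · A_{x_β} · K_γ)^{⊗t} ⊗ ((K_α · A_{x_β} · K_γ)^*)^{⊗t} = (1/Z) ∫_{SU(2)} ∫_1^∞ ∫_{SU(2)} (K · A_x · K')^{⊗t} ⊗ ((K · A_x · K')^*)^{⊗t} dμ_K(K') v(x) dx dμ_K(K). -/
/-!
The map `L ↦ L^{⊗t} ⊗ (L^*)^{⊗t}` is multiplicative, so the weighted sum over triples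
`(α, β, γ)` is the matrix product of the three design sums. Replacing each factor by the
integral it equals, and pulling constant matrix factors through the entrywise integrals one
variable at a time (all entries involved are integrable: unitary entries are bounded by `1`),
turns this product into the iterated integral.
-/

open Matrix MeasureTheory
open scoped Kronecker

section KroneckerPower

variable {d : ℕ} (t : ℕ)

lemma kroneckerPow_mul (A B : Matrix (Fin d) (Fin d) ℂ) :
    kroneckerPow t (A * B) = kroneckerPow t A * kroneckerPow t B := by
  ext i j
  simp only [kroneckerPow, Matrix.mul_apply, Finset.prod_univ_sum, Fintype.piFinset_univ,
    Finset.prod_mul_distrib]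

lemma designMat_mul (A B : Matrix (Fin d) (Fin d) ℂ) :
    designMat t (A * B) = designMat t A * designMat t B := by
  rw [designMat, designMat, designMat, Matrix.map_mul, kroneckerPow_mul, kroneckerPow_mul,
    Matrix.mul_kronecker_mul]

lemma sum_sum_sum_smul_designMat_mul {I J L : Type*} [Fintype I] [Fintype J] [Fintype L]
    (A : I → Matrix (Fin d) (Fin d) ℂ) (a : I → ℂ) (B : J → Matrix (Fin d) (Fin d) ℂ)
    (b : J → ℂ) (C : L → Matrix (Fin d) (Fin d) ℂ) (c : L → ℂ) :
    ∑ α, ∑ β, ∑ γ, (a α * b β * c γ) • designMat t (A α * B β * C γ) =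
      (∑ α, a α • designMat t (A α)) * (∑ β, b β • designMat t (B β)) *
        ∑ γ, c γ • designMat t (C γ) := by
  rw [Finset.sum_mul, Finset.sum_mul]
  refine Finset.sum_congr rfl fun α _ => ?_
  rw [Finset.mul_sum (a := a α • designMat t (A α)), Finset.sum_mul]
  refine Finset.sum_congr rfl fun β _ => ?_
  rw [Finset.mul_sum]
  refine Finset.sum_congr rfl fun γ _ => ?_
  rw [designMat_mul, designMat_mul, smul_mul_smul, smul_mul_smul]

lemma measurable_designMat_apply (p q : (Fin t → Fin d) × (Fin t → Fin d)) :
    Measurable fun L : Matrix (Fin d) (Fin d) ℂ => designMat t L p q := by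
  simp only [designMat, kroneckerMap_apply, kroneckerPow, map_apply]
  fun_prop

lemma norm_designMat_apply_le_one {U : Matrix (Fin d) (Fin d) ℂ}
    (hU : U ∈ unitaryGroup (Fin d) ℂ) (p q : (Fin t → Fin d) × (Fin t → Fin d)) :
    ‖designMat t U p q‖ ≤ 1 := by
  have hentry : ∀ i j, ‖U i j‖ ≤ 1 := entry_norm_bound_of_unitary hU
  simp only [designMat, kroneckerMap_apply, kroneckerPow, map_apply, norm_mul, norm_prod,
    RCLike.norm_conj]
  exact mul_le_one₀ (Finset.prod_le_one (fun _ _ => norm_nonneg _) fun _ _ => hentry _ _)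
    (Finset.prod_nonneg fun _ _ => norm_nonneg _)
    (Finset.prod_le_one (fun _ _ => norm_nonneg _) fun _ _ => hentry _ _)

end KroneckerPower

section EntrywiseIntegral

variable {X : Type*} [MeasurableSpace X] {μ : Measure X} {l m n o : Type*} [Fintype m]
  [Fintype n]

noncomputable def entrywiseIntegral (f : X → Matrix m n ℂ) (μ : Measure X) : Matrix m n ℂ :=
  of fun i j => ∫ x, f x i j ∂μ

lemma integral_mul_mul_apply (C : Matrix l m ℂ) (f : X → Matrix m n ℂ) (D : Matrix n o ℂ)
    (hf : ∀ r s, Integrable (fun x => f x r s) μ) (i : l) (j : o) :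
    ∫ x, (C * f x * D) i j ∂μ = (C * entrywiseIntegral f μ * D) i j := by
  simp only [Matrix.mul_apply, entrywiseIntegral, of_apply, Finset.sum_mul]
  rw [integral_finsetSum _ fun s _ => integrable_finsetSum _ fun r _ =>
    ((hf r s).const_mul _).mul_const _]
  refine Finset.sum_congr rfl fun s _ => ?_
  rw [integral_finsetSum _ fun r _ => ((hf r s).const_mul _).mul_const _]
  exact Finset.sum_congr rfl fun r _ => by rw [integral_mul_const, integral_const_mul]

end EntrywiseIntegral

section SpecialUnitary

variable {d : ℕ} (t : ℕ) (μ : Measure ↥(specialUnitaryGroup (Fin d) ℂ))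
  [IsFiniteMeasure μ]

lemma integrable_designMat_apply (p q : (Fin t → Fin d) × (Fin t → Fin d)) :
    Integrable (fun U : ↥(specialUnitaryGroup (Fin d) ℂ) =>
      designMat t (U : Matrix (Fin d) (Fin d) ℂ) p q) μ :=
  Integrable.mono' (integrable_const 1)
    ((measurable_designMat_apply t p q).comp measurable_subtype_coe).aestronglyMeasurable
    (ae_of_all _ fun U => norm_designMat_apply_le_one t U.2.1 p q)

lemma integral_designMat_const_mul_apply (L : Matrix (Fin d) (Fin d) ℂ)
    (p q : (Fin t → Fin d) × (Fin t → Fin d)) :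
    ∫ U : ↥(specialUnitaryGroup (Fin d) ℂ),
        designMat t (L * (U : Matrix (Fin d) (Fin d) ℂ)) p q ∂μ =
      (designMat t L * entrywiseIntegral (fun U : ↥(specialUnitaryGroup (Fin d) ℂ) =>
        designMat t (U : Matrix (Fin d) (Fin d) ℂ)) μ) p q := by
  simpa only [designMat_mul, Matrix.mul_one] using
    integral_mul_mul_apply (designMat t L) _ 1 (integrable_designMat_apply t μ) p q

lemma integral_designMat_mul_const_apply {n : Type*}
    (M : Matrix ((Fin t → Fin d) × (Fin t → Fin d)) n ℂ)
    (p : (Fin t → Fin d) × (Fin t → Fin d)) (q : n) :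
    ∫ U : ↥(specialUnitaryGroup (Fin d) ℂ),
        (designMat t (U : Matrix (Fin d) (Fin d) ℂ) * M) p q ∂μ =
      (entrywiseIntegral (fun U : ↥(specialUnitaryGroup (Fin d) ℂ) =>
        designMat t (U : Matrix (Fin d) (Fin d) ℂ)) μ * M) p q := by
  simpa only [Matrix.one_mul] using
    integral_mul_mul_apply 1 _ M (integrable_designMat_apply t μ) p q

end SpecialUnitary

theorem product_t_design_SL2C_general (t : ℕ)
    (v : ℝ → ℝ)
    (Z : ℝ)
    (hint : ∀ p q : (Fin t → Fin 2) × (Fin t → Fin 2),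
      IntegrableOn (fun x : ℝ => (v x : ℂ) * designMat t (Ax x) p q) (Set.Ici (1 : ℝ)))
    (μK : Measure ↥(Matrix.specialUnitaryGroup (Fin 2) ℂ))
    [IsProbabilityMeasure μK]
    {I J : Type*} [Fintype I] [Fintype J]
    (K : I → ↥(Matrix.specialUnitaryGroup (Fin 2) ℂ)) (k : I → ℝ)
    (xs : J → ℝ) (a : J → ℝ)
    (hKdesign : ∀ p q : (Fin t → Fin 2) × (Fin t → Fin 2),
      (∑ α : I, (k α : ℂ) • designMat t ((K α : Matrix (Fin 2) (Fin 2) ℂ))) p q =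
        ∫ U : ↥(Matrix.specialUnitaryGroup (Fin 2) ℂ),
          designMat t (U : Matrix (Fin 2) (Fin 2) ℂ) p q ∂μK)
    (hAdesign : ∀ p q : (Fin t → Fin 2) × (Fin t → Fin 2),
      (∑ β : J, (a β : ℂ) • designMat t (Ax (xs β))) p q =
        (1 / Z : ℂ) * ∫ x in Set.Ici (1 : ℝ), (v x : ℂ) * designMat t (Ax x) p q) :
    ∀ p q : (Fin t → Fin 2) × (Fin t → Fin 2),
      (∑ α : I, ∑ β : J, ∑ γ : I, ((k α * a β * k γ : ℝ) : ℂ) •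
          designMat t ((K α : Matrix (Fin 2) (Fin 2) ℂ) * Ax (xs β) *
            (K γ : Matrix (Fin 2) (Fin 2) ℂ))) p q =
        (1 / Z : ℂ) * ∫ Kl : ↥(Matrix.specialUnitaryGroup (Fin 2) ℂ),
          (∫ x in Set.Ici (1 : ℝ), (v x : ℂ) *
            ∫ Kr : ↥(Matrix.specialUnitaryGroup (Fin 2) ℂ),
              designMat t ((Kl : Matrix (Fin 2) (Fin 2) ℂ) * Ax x *
                (Kr : Matrix (Fin 2) (Fin 2) ℂ)) p q ∂μK) ∂μK := by
  set H := entrywiseIntegral (fun U : ↥(specialUnitaryGroup (Fin 2) ℂ) =>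
    designMat t (U : Matrix (Fin 2) (Fin 2) ℂ)) μK with hH_def
  set N := entrywiseIntegral (fun x => (v x : ℂ) • designMat t (Ax x))
    (volume.restrict (Set.Ici 1)) with hN_def
  have hK : ∑ α, (k α : ℂ) • designMat t (K α : Matrix (Fin 2) (Fin 2) ℂ) = H :=
    Matrix.ext hKdesign
  have hA : ∑ β, (a β : ℂ) • designMat t (Ax (xs β)) = (1 / Z : ℂ) • N := by
    ext p q
    rw [hAdesign, hN_def]
    simp [entrywiseIntegral, Matrix.smul_apply]
  have integral_Ax (L : Matrix (Fin 2) (Fin 2) ℂ) (p q) :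
      ∫ x in Set.Ici 1, (v x : ℂ) * (designMat t (L * Ax x) * H) p q =
        (designMat t L * (N * H)) p q := by
    simpa only [designMat_mul, Matrix.mul_smul, Matrix.smul_mul, Matrix.smul_apply, smul_eq_mul,
      Matrix.mul_assoc] using integral_mul_mul_apply (designMat t L)
        (fun x => (v x : ℂ) • designMat t (Ax x)) H hint p q
  intro p q
  simp_rw [integral_designMat_const_mul_apply, ← hH_def, integral_Ax,
    integral_designMat_mul_const_apply, ← hH_def]
  push_cast
  rw [sum_sum_sum_smul_designMat_mul, hK, hA, Matrix.mul_smul, Matrix.smul_mul, Matrix.smul_apply,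
    smul_eq_mul, Matrix.mul_assoc]

/-- Product `t`-design theorem for `SL(2,ℂ)`: a `t`-design on `SU(2)`
combined with a finite averaging set for the weighted non-compact factor `{A_x : x ≥ 1}`
yields, by taking products `K_α · A_{x_β} · K_γ` with product weights, a finite averaging set
for the weighted integral over all of `SL(2,ℂ)` in Cartan coordinates
(all integrals entrywise; `μK` is the normalized Haar probability measure on `SU(2)`). -/
theorem product_t_design_SL2C (t : ℕ)
    (v : ℝ → ℝ) (hv_meas : Measurable v) (hv_nonneg : ∀ x, 0 ≤ v x)
    (hv_supp : Function.support v ⊆ Set.Ici 1)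
    (hv_int : IntegrableOn v (Set.Ici (1 : ℝ)))
    (Z : ℝ) (hZ : Z = ∫ x in Set.Ici (1 : ℝ), v x) (hZpos : 0 < Z)
    (hint : ∀ p q : (Fin t → Fin 2) × (Fin t → Fin 2),
      IntegrableOn (fun x : ℝ => (v x : ℂ) * designMat t (Ax x) p q) (Set.Ici (1 : ℝ)))
    (μK : Measure ↥(Matrix.specialUnitaryGroup (Fin 2) ℂ))
    [μK.IsHaarMeasure] [IsProbabilityMeasure μK]
    {I J : Type*} [Fintype I] [Fintype J]
    (K : I → ↥(Matrix.specialUnitaryGroup (Fin 2) ℂ)) (k : I → ℝ)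
    (xs : J → ℝ) (a : J → ℝ) (hxs : ∀ β, 1 ≤ xs β)
    (hKdesign : ∀ p q : (Fin t → Fin 2) × (Fin t → Fin 2),
      (∑ α : I, (k α : ℂ) • designMat t ((K α : Matrix (Fin 2) (Fin 2) ℂ))) p q =
        ∫ U : ↥(Matrix.specialUnitaryGroup (Fin 2) ℂ),
          designMat t (U : Matrix (Fin 2) (Fin 2) ℂ) p q ∂μK)
    (hAdesign : ∀ p q : (Fin t → Fin 2) × (Fin t → Fin 2),
      (∑ β : J, (a β : ℂ) • designMat t (Ax (xs β))) p q =
        (1 / Z : ℂ) * ∫ x in Set.Ici (1 : ℝ), (v x : ℂ) * designMat t (Ax x) p q) :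
    ∀ p q : (Fin t → Fin 2) × (Fin t → Fin 2),
      (∑ α : I, ∑ β : J, ∑ γ : I, ((k α * a β * k γ : ℝ) : ℂ) •
          designMat t ((K α : Matrix (Fin 2) (Fin 2) ℂ) * Ax (xs β) *
            (K γ : Matrix (Fin 2) (Fin 2) ℂ))) p q =
        (1 / Z : ℂ) * ∫ Kl : ↥(Matrix.specialUnitaryGroup (Fin 2) ℂ),
          (∫ x in Set.Ici (1 : ℝ), (v x : ℂ) *
            ∫ Kr : ↥(Matrix.specialUnitaryGroup (Fin 2) ℂ),
              designMat t ((Kl : Matrix (Fin 2) (Fin 2) ℂ) * Ax x *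
                (Kr : Matrix (Fin 2) (Fin 2) ℂ)) p q ∂μK) ∂μK :=
  product_t_design_SL2C_general t v Z hint μK K k xs a hKdesign hAdesign
end

section
/- Roots of orthogonal polynomials: let a < b be real numbers (b possibly +∞), let w : ℝ → ℝ be a measurable weight function with w(x) > 0 for almost every x ∈ (a,b), such that x ↦ x^k · w(x) is integrable on (a,b) for all k ≤ 2n. Let p be a real polynomial of degree exactly n ≥ 1 satisfying ∫_a^b p(x)·q(x)·w(x) dx = 0 for every real polynomial q of degree < n. Then p has n distinct real roots, all lying in the open interval (a,b). -/
open MeasureTheory Polynomial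

/-- A polynomial with no roots on an ord-connected set has constant sign there. -/
lemma constSign_of_no_root (I : Set ℝ) (hI : I.OrdConnected) (f : Polynomial ℝ)
    (h : ∀ r ∈ I, ¬ f.IsRoot r) :
    (∀ x ∈ I, 0 ≤ f.eval x) ∨ (∀ x ∈ I, f.eval x ≤ 0) := by
  by_contra hc
  push_neg at hc
  obtain ⟨⟨x, hx, hxneg⟩, ⟨y, hy, hypos⟩⟩ := hc
  rcases le_total x y with hxy | hxy
  · obtain ⟨z, hz, hz0⟩ := intermediate_value_Icc hxy
      (f.continuous_aeval.continuousOn (s := Set.Icc x y))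
      (Set.mem_Icc.mpr ⟨hxneg.le, hypos.le⟩)
    exact h z (hI.out hx hy hz) hz0
  · obtain ⟨z, hz, hz0⟩ := intermediate_value_Icc' hxy
      (f.continuous_aeval.continuousOn (s := Set.Icc y x))
      (Set.mem_Icc.mpr ⟨hxneg.le, hypos.le⟩)
    exact h z (hI.out hy hx hz) hz0

/-- A polynomial all of whose roots in an ord-connected set have even multiplicity
has constant sign there. -/
lemma constSign_of_even_rootMultiplicity (I : Set ℝ) (hI : I.OrdConnected) :
    ∀ N (f : Polynomial ℝ), f.natDegree ≤ N → f ≠ 0 →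
    (∀ r ∈ I, Even (f.rootMultiplicity r)) →
    (∀ x ∈ I, 0 ≤ f.eval x) ∨ (∀ x ∈ I, f.eval x ≤ 0) := by
  intro N
  induction N with
  | zero =>
    intro f hd hf _
    refine constSign_of_no_root I hI f ?_
    intro r hr hroot
    obtain ⟨c, rfl⟩ := Polynomial.natDegree_eq_zero.mp (Nat.le_zero.mp hd)
    simp only [IsRoot, eval_C] at hroot
    exact hf (by rw [hroot, map_zero])
  | succ N ih =>
    intro f hdeg hf hev
    by_cases hroot : ∃ r ∈ I, f.IsRoot r
    · obtain ⟨r, hrI, hr⟩ := hroot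
      set m := f.rootMultiplicity r with hm'
      have hm : 0 < m := (rootMultiplicity_pos hf).2 hr
      have hme : Even m := hev r hrI
      set g := f /ₘ (X - C r) ^ m with hg'
      have hfg : (X - C r) ^ m * g = f := pow_mul_divByMonic_rootMultiplicity_eq f r
      have hg0 : g ≠ 0 := by
        intro h0
        rw [h0, mul_zero] at hfg
        exact hf hfg.symm
      have hXr : ((X - C r : Polynomial ℝ)) ^ m ≠ 0 := pow_ne_zero _ (X_sub_C_ne_zero r)
      have hdegs : ((X - C r : Polynomial ℝ) ^ m).natDegree + g.natDegree = f.natDegree := by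
        rw [← natDegree_mul hXr hg0, hfg]
      have hXrdeg : ((X - C r : Polynomial ℝ) ^ m).natDegree = m := by
        simp [natDegree_pow]
      have hgdeg : g.natDegree ≤ N := by omega
      have hgev : ∀ s ∈ I, Even (g.rootMultiplicity s) := by
        intro s hs
        have h1 : f.rootMultiplicity s
            = ((X - C r : Polynomial ℝ) ^ m).rootMultiplicity s + g.rootMultiplicity s := by
          conv_lhs => rw [← hfg]
          exact rootMultiplicity_mul (by rw [hfg]; exact hf)
        have h2 : Even (((X - C r : Polynomial ℝ) ^ m).rootMultiplicity s) := by
          by_cases hsr : s = r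
          · subst hsr; rw [rootMultiplicity_X_sub_C_pow]; exact hme
          · rw [rootMultiplicity_eq_zero]
            · exact Even.zero
            · simp [IsRoot, sub_eq_zero, hsr]
        have h3 : Even (f.rootMultiplicity s) := hev s hs
        rw [h1] at h3
        exact (Nat.even_add.mp h3).mp h2
      rcases ih g hgdeg hg0 hgev with hsg | hsg
      · left
        intro x hx
        rw [← hfg, eval_mul, eval_pow, eval_sub, eval_X, eval_C]
        exact mul_nonneg (hme.pow_nonneg _) (hsg x hx)
      · right
        intro x hx
        rw [← hfg, eval_mul, eval_pow, eval_sub, eval_X, eval_C]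
        exact mul_nonpos_of_nonneg_of_nonpos (hme.pow_nonneg _) (hsg x hx)
    · push_neg at hroot
      exact constSign_of_no_root I hI f hroot

/-- Integrability of a polynomial times the weight from moment integrability. -/
lemma integrableOn_poly_mul (S : Set ℝ) (w : ℝ → ℝ) (n : ℕ)
    (hint : ∀ k : ℕ, k ≤ 2 * n → IntegrableOn (fun x : ℝ => x ^ k * w x) S)
    (r : Polynomial ℝ) (hr : r.natDegree ≤ 2 * n) :
    IntegrableOn (fun x => r.eval x * w x) S := by
  have hE : (fun x : ℝ => r.eval x * w x)
      = fun x => ∑ k ∈ Finset.range (2 * n + 1), r.coeff k * (x ^ k * w x) := by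
    funext x
    rw [eval_eq_sum_range' (lt_of_le_of_lt hr (Nat.lt_succ_self _)), Finset.sum_mul]
    exact Finset.sum_congr rfl fun k _ => by ring
  rw [hE]
  exact MeasureTheory.integrable_finset_sum _ fun k hk =>
    ((hint k (by simp at hk; omega)).const_mul _)

/-- The key positivity contradiction. -/
lemma integral_pos_contra (S : Set ℝ) (hSm : MeasurableSet S) (hSpos : 0 < volume S)
    (w : ℝ → ℝ) (hw_pos : ∀ᵐ x ∂(volume.restrict S), 0 < w x)
    (f : Polynomial ℝ) (hf0 : f ≠ 0)
    (hsgn : ∀ x ∈ S, 0 ≤ f.eval x)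
    (hintf : IntegrableOn (fun x => f.eval x * w x) S)
    (h0 : ∫ x in S, f.eval x * w x = 0) : False := by
  have hnn : 0 ≤ᵐ[volume.restrict S] fun x => f.eval x * w x := by
    filter_upwards [hw_pos, ae_restrict_mem hSm] with x hw hx
    exact mul_nonneg (hsgn x hx) hw.le
  have hz := (integral_eq_zero_iff_of_nonneg_ae hnn hintf).mp h0
  have heval0 : ∀ᵐ x ∂(volume.restrict S), f.eval x = 0 := by
    filter_upwards [hz, hw_pos] with x h hw
    have : f.eval x * w x = 0 := h
    rcases mul_eq_zero.mp this with h' | h'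
    · exact h'
    · exact absurd h' (ne_of_gt hw)
  have hnull : volume.restrict S {x | ¬ f.eval x = 0} = 0 := ae_iff.mp heval0
  have hroot0 : volume {x : ℝ | f.eval x = 0} = 0 :=
    (f.finite_setOf_isRoot hf0).measure_zero _
  have h1 : volume.restrict S {x | f.eval x = 0} = 0 := by
    rw [Measure.restrict_apply' hSm]
    exact measure_mono_null Set.inter_subset_left hroot0
  have : volume S ≤ 0 := by
    have huniv : volume.restrict S Set.univ = volume S := by
      rw [Measure.restrict_apply' hSm]; simp
    have hcover : (Set.univ : Set ℝ) ⊆ {x | f.eval x = 0} ∪ {x | ¬ f.eval x = 0} := by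
      intro x _; by_cases h : f.eval x = 0 <;> simp [h]
    calc volume S = volume.restrict S Set.univ := huniv.symm
      _ ≤ volume.restrict S ({x | f.eval x = 0} ∪ {x | ¬ f.eval x = 0}) := measure_mono hcover
      _ ≤ volume.restrict S {x | f.eval x = 0} + volume.restrict S {x | ¬ f.eval x = 0} :=
          measure_union_le _ _
      _ = 0 := by rw [h1, hnull, add_zero]
  exact absurd (le_zero_iff.mp this) (ne_of_gt hSpos)

/-- Roots of orthogonal polynomials. -/
theorem orthogonal_polynomial_roots
    (a : ℝ) (b : EReal) (hab : (a : EReal) < b)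
    (S : Set ℝ) (hS : S = {x : ℝ | a < x ∧ (x : EReal) < b})
    (w : ℝ → ℝ) (hw_meas : Measurable w)
    (hw_pos : ∀ᵐ x ∂(volume.restrict S), 0 < w x)
    (n : ℕ) (hn : 1 ≤ n)
    (hint : ∀ k : ℕ, k ≤ 2 * n → IntegrableOn (fun x : ℝ => x ^ k * w x) S)
    (p : Polynomial ℝ) (hdeg : p.natDegree = n)
    (horth : ∀ q : Polynomial ℝ, q.degree < (n : WithBot ℕ) →
      ∫ y in S, p.eval y * q.eval y * w y = 0) :
    ∃ x : Fin n → ℝ, Function.Injective x ∧ ∀ i, x i ∈ S ∧ p.IsRoot (x i) := by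
  classical
  -- basic properties of S
  obtain ⟨hSm, hSpos, hSord⟩ : MeasurableSet S ∧ 0 < volume S ∧ S.OrdConnected := by
    induction b with
    | bot => simp at hab
    | coe r =>
      have har : a < r := by exact_mod_cast hab
      have hSeq : S = Set.Ioo a r := by
        ext x; simp [hS, EReal.coe_lt_coe_iff]
      rw [hSeq]
      exact ⟨measurableSet_Ioo, by simp [Real.volume_Ioo, har], Set.ordConnected_Ioo⟩
    | top =>
      have hSeq : S = Set.Ioi a := by
        ext x; simp [hS]
      rw [hSeq]
      refine ⟨measurableSet_Ioi, ?_, Set.ordConnected_Ioi⟩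
      simp [Real.volume_Ioi]
  have hp0 : p ≠ 0 := by
    intro h
    rw [h, natDegree_zero] at hdeg
    omega
  -- the set of odd-multiplicity roots of p in S
  set T : Finset ℝ := p.roots.toFinset.filter
      (fun r => r ∈ S ∧ Odd (p.rootMultiplicity r)) with hT
  have hTmem : ∀ r, r ∈ T ↔ (p.IsRoot r ∧ r ∈ S ∧ Odd (p.rootMultiplicity r)) := by
    intro r
    rw [hT, Finset.mem_filter, Multiset.mem_toFinset, mem_roots hp0]
  have hTcard : T.card ≤ n := by
    calc T.card ≤ p.roots.toFinset.card := by
          rw [hT]; exact Finset.card_filter_le _ _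
      _ ≤ Multiset.card p.roots := p.roots.toFinset_card_le
      _ ≤ p.natDegree := p.card_roots'
      _ = n := hdeg
  have hTn : T.card = n := by
    by_contra hne
    have hlt : T.card < n := lt_of_le_of_ne hTcard hne
    set q : Polynomial ℝ := (T.val.map (fun s => X - C s)).prod with hq
    have hqmonic : q.Monic :=
      monic_multiset_prod_of_monic _ _ (fun s _ => monic_X_sub_C s)
    have hq0 : q ≠ 0 := hqmonic.ne_zero
    have hqroots : q.roots = T.val := roots_multiset_prod_X_sub_C _
    have hqdeg : q.natDegree = T.card := by
      rw [hq, natDegree_multiset_prod_X_sub_C_eq_card]; rfl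
    have hqdeg' : q.degree < (n : WithBot ℕ) := by
      rw [degree_eq_natDegree hq0, hqdeg]
      exact_mod_cast hlt
    have h0 := horth q hqdeg'
    have hpq0 : p * q ≠ 0 := mul_ne_zero hp0 hq0
    -- all roots of p*q in S have even multiplicity
    have hev : ∀ r ∈ S, Even ((p * q).rootMultiplicity r) := by
      intro r hr
      rw [rootMultiplicity_mul hpq0]
      have hqm : q.rootMultiplicity r = if r ∈ T then 1 else 0 := by
        rw [← count_roots, hqroots]
        split
        · exact Multiset.count_eq_one_of_mem T.nodup (by assumption)
        · exact Multiset.count_eq_zero_of_notMem (by assumption)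
      by_cases hrT : r ∈ T
      · rw [hqm, if_pos hrT]
        have hodd : Odd (p.rootMultiplicity r) := ((hTmem r).mp hrT).2.2
        exact hodd.add_one
      · rw [hqm, if_neg hrT, add_zero]
        rcases Nat.even_or_odd (p.rootMultiplicity r) with he | ho
        · exact he
        · exfalso
          have hroot : p.IsRoot r := by
            have : 0 < p.rootMultiplicity r := ho.pos
            exact (rootMultiplicity_pos hp0).mp this
          exact hrT ((hTmem r).mpr ⟨hroot, hr, ho⟩)
    -- integrability of (p*q).eval * w
    have hdegpq : (p * q).natDegree ≤ 2 * n := by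
      rw [natDegree_mul hp0 hq0, hdeg, hqdeg]
      omega
    have hintpq : IntegrableOn (fun x => (p * q).eval x * w x) S :=
      integrableOn_poly_mul S w n hint _ hdegpq
    have h0' : ∫ x in S, (p * q).eval x * w x = 0 := by
      rw [← h0]
      congr 1
      funext x
      rw [eval_mul]
    rcases constSign_of_even_rootMultiplicity S hSord (p * q).natDegree (p * q)
        le_rfl hpq0 hev with hsg | hsg
    · exact integral_pos_contra S hSm hSpos w hw_pos (p * q) hpq0 hsg hintpq h0'
    · refine integral_pos_contra S hSm hSpos w hw_pos (-(p * q)) (neg_ne_zero.mpr hpq0)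
        ?_ ?_ ?_
      · intro x hx
        rw [eval_neg]
        linarith [hsg x hx]
      · have : (fun x => (-(p * q)).eval x * w x) = fun x => -((p * q).eval x * w x) := by
          funext x; rw [eval_neg]; ring
        rw [this]
        exact hintpq.neg
      · have : (fun x => (-(p * q)).eval x * w x) = fun x => -((p * q).eval x * w x) := by
          funext x; rw [eval_neg]; ring
        rw [this, integral_neg, h0']; exact neg_zero
  -- conclude
  refine ⟨fun i => (T.orderIsoOfFin hTn i : ℝ), ?_, ?_⟩
  · intro i j hij
    exact (T.orderIsoOfFin hTn).injective (Subtype.ext hij)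
  · intro i
    have hmem : ((T.orderIsoOfFin hTn i : ℝ)) ∈ T := (T.orderIsoOfFin hTn i).2
    obtain ⟨hroot, hS', _⟩ := (hTmem _).mp hmem
    exact ⟨hS', hroot⟩
end
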